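/- arXiv:1112.0831 — 2 statements merged into one kernel-verified Lean document; each statement's English description precedes it below -/
import Mathlib

section
/- (Abstract transversality, after Popa.) Let K be a Hilbert space, L ⊆ K a closed subspace with orthogonal projection P : K → L, and let (α_t)_{t∈ℝ} be a one-parameter group of unitaries on K (α_s α_t = α_{s+t}, α_0 = id). Suppose β is a unitary on K such that β fixes L pointwise, β² = id, and β α_t = α_{-t} β for all t. Then for every x ∈ L and every t ∈ ℝ: ‖α_{2t}(x) - x‖ ≤ 2‖α_t(x) - P(α_t(x))‖. -/
theorem stmt_8 {K : Type*} [NormedAddCommGroup K] [InnerProductSpace ℝ K]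
    (L : Submodule ℝ K) [L.HasOrthogonalProjection]
    (α : ℝ → (K ≃ₗᵢ[ℝ] K))
    (hgrp : ∀ s t : ℝ, α (s + t) = α s * α t) (h0 : α 0 = 1)
    (β : K ≃ₗᵢ[ℝ] K)
    (hβL : ∀ x ∈ L, β x = x) (hβ2 : β * β = 1)
    (hβα : ∀ t : ℝ, (β : K ≃ₗᵢ[ℝ] K) * α t = α (-t) * β) :
    ∀ x ∈ L, ∀ t : ℝ,
      ‖α (2 * t) x - x‖ ≤ 2 * ‖α t x - (L.orthogonalProjectionOnto (α t x) : K)‖ := by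
  intro x hx t
  set y := α t x with hy
  set p : K := (L.orthogonalProjectionOnto (α t x) : K) with hp
  have hβy : β y = α (-t) x := by
    have := congrArg (fun f : K ≃ₗᵢ[ℝ] K => f x) (hβα t)
    simp only [LinearIsometryEquiv.coe_mul, Function.comp_apply] at this
    rw [hy, this, hβL x hx]
  have hαy : α t y = α (2 * t) x := by
    have := congrArg (fun f : K ≃ₗᵢ[ℝ] K => f x) (hgrp t t)
    simp only [LinearIsometryEquiv.coe_mul, Function.comp_apply] at this
    rw [hy, ← this]; ring_nf
  have hαβy : α t (β y) = x := by
    rw [hβy]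
    have := congrArg (fun f : K ≃ₗᵢ[ℝ] K => f x) (hgrp t (-t))
    simp only [LinearIsometryEquiv.coe_mul, Function.comp_apply] at this
    rw [← this]
    simp [h0]
  have hβp : β p = p := hβL p (L.orthogonalProjectionOnto (α t x)).2
  calc ‖α (2 * t) x - x‖ = ‖α t y - α t (β y)‖ := by rw [hαy, hαβy]
    _ = ‖y - β y‖ := by rw [← map_sub, (α t).norm_map]
    _ = ‖(y - p) - β (y - p)‖ := by rw [map_sub, hβp]; abel_nf
    _ ≤ ‖y - p‖ + ‖β (y - p)‖ := norm_sub_le _ _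
    _ = 2 * ‖y - p‖ := by rw [β.norm_map]; ring
end

section
/- Let (α_t)_{t∈ℝ} be a one-parameter group of unitaries on a Hilbert space K and let L ⊆ K be a closed subspace with orthogonal projection P, and suppose there is a symmetry β as in Popa's transversality setup (β unitary, β² = id, β fixes L pointwise, βα_t = α_{-t}β). If for a subset S ⊆ L the convergence ‖α_t(x) - P(α_t(x))‖ → 0 as t → 0 is uniform over x ∈ S, then ‖α_t(x) - x‖ → 0 as t → 0 uniformly over x ∈ S. -/
theorem stmt_18 {K : Type*} [NormedAddCommGroup K] [InnerProductSpace ℝ K]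
    (L : Submodule ℝ K) [L.HasOrthogonalProjection]
    (α : ℝ → (K ≃ₗᵢ[ℝ] K))
    (hgrp : ∀ s t : ℝ, α (s + t) = α s * α t) (h0 : α 0 = 1)
    (β : K ≃ₗᵢ[ℝ] K)
    (hβL : ∀ x ∈ L, β x = x) (hβ2 : β * β = 1)
    (hβα : ∀ t : ℝ, (β : K ≃ₗᵢ[ℝ] K) * α t = α (-t) * β)
    (S : Set K) (hS : S ⊆ L)
    (hunif : ∀ ε > 0, ∃ δ > 0, ∀ t : ℝ, |t| < δ → ∀ x ∈ S,
      ‖α t x - (L.orthogonalProjectionOnto (α t x) : K)‖ < ε) :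
    ∀ ε > 0, ∃ δ > 0, ∀ t : ℝ, |t| < δ → ∀ x ∈ S, ‖α t x - x‖ < ε := by
  intro ε hε
  obtain ⟨δ, hδ, hδ'⟩ := hunif (ε / 2) (by linarith)
  refine ⟨δ, hδ, fun t ht x hx => ?_⟩
  have hx' : x ∈ L := hS hx
  set y : K := α (t / 2) x with hy
  set Py : K := (L.orthogonalProjectionOnto y : K) with hPy
  have hPyL : Py ∈ L := (L.orthogonalProjectionOnto y).2
  have hβy : β y = α (-(t / 2)) x := by
    have h := congrArg (fun f : K ≃ₗᵢ[ℝ] K => f x) (hβα (t / 2))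
    simp only [LinearIsometryEquiv.coe_mul, Function.comp_apply] at h
    simpa [hβL x hx'] using h
  have h1 : α (t / 2) y = α t x := by
    have h := congrArg (fun f : K ≃ₗᵢ[ℝ] K => f x) (hgrp (t / 2) (t / 2))
    simp only [LinearIsometryEquiv.coe_mul] at h
    rw [show t / 2 + t / 2 = t by ring] at h
    simpa using h.symm
  have h2 : α (t / 2) (β y) = x := by
    rw [hβy]
    have h := congrArg (fun f : K ≃ₗᵢ[ℝ] K => f x) (hgrp (t / 2) (-(t / 2)))
    simp only [LinearIsometryEquiv.coe_mul] at h
    rw [show t / 2 + -(t / 2) = 0 by ring, h0] at h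
    simpa using h.symm
  have key : ‖α t x - x‖ = ‖y - β y‖ := by
    rw [← h1, ← h2, ← map_sub, LinearIsometryEquiv.norm_map]
  have hβdiff : β (y - Py) = β y - Py := by
    rw [map_sub, hβL Py hPyL]
  have hbound : ‖y - β y‖ ≤ 2 * ‖y - Py‖ := by
    have : y - β y = (y - Py) - β (y - Py) := by rw [hβdiff]; abel
    rw [this]
    calc ‖(y - Py) - β (y - Py)‖ ≤ ‖y - Py‖ + ‖β (y - Py)‖ := norm_sub_le _ _
      _ = 2 * ‖y - Py‖ := by rw [LinearIsometryEquiv.norm_map]; ring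
  have ht2 : |t / 2| < δ := lt_of_le_of_lt (by rw [abs_div, abs_two]; linarith [abs_nonneg t]) ht
  have := hδ' (t / 2) ht2 x hx
  rw [key]
  calc ‖y - β y‖ ≤ 2 * ‖y - Py‖ := hbound
    _ < 2 * (ε / 2) := by linarith
    _ = ε := by ring
end
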